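/- Every element φ of ∏_p C(ℤ_p, ℤ_p) (a family of continuous functions φ_p : ℤ_p → ℤ_p, one for each prime p) can be uniquely written as a uniformly convergent series φ = Σ_{n≥0} c_n · binom(x, n), where c_n ∈ Ẑ = ∏_p ℤ_p, c_n → 0 in Ẑ, and the binomial polynomial binom(x,n) = x(x−1)⋯(x−n+1)/n! is evaluated componentwise. Moreover the coefficients satisfy c_k = φ(k) − Σ_{h=0}^{k−1} c_h · binom(k, h), where φ(k) = (φ_p(k))_p. -/

import Mathlib

/-!
For each prime `p` this is Mahler's theorem for `ℤ_[p]`-valued functions: the coefficients of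
`φ_p` are its iterated forward differences `Δⁿ φ_p (0)`, which tend to `0`. At a natural number
`k` the binomial series is the finite sum `Σ_{n ≤ k} c_n binom(k, n)`, so any expansion satisfies
the recursion for `c_k`, and the recursion determines the coefficients.
-/

open Polynomial Filter

instance (p : Nat.Primes) : Fact (p : ℕ).Prime := ⟨p.2⟩

/-- `Ẑ = ∏_p ℤ_p` with the product topology. -/
abbrev Zhat : Type := ∀ p : Nat.Primes, ℤ_[(p : ℕ)]

/-- The binomial polynomial `binom(x, n) = x(x−1)⋯(x−n+1)/n! ∈ ℚ[x]`. -/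
noncomputable def binomPoly (n : ℕ) : Polynomial ℚ := ((Nat.factorial n : ℚ))⁻¹ • descPochhammer ℚ n

/-- `c : ℕ → Ẑ` is a family of Mahler coefficients for `φ = (φ_p)_p`: it tends to `0` in `Ẑ`
and, for each prime `p`, the series `Σ_n c_{n,p} binom(x, n)` converges uniformly on `ℤ_p`
to `φ_p`. -/
def IsMahlerExpansion (φ : ∀ p : Nat.Primes, C(ℤ_[(p : ℕ)], ℤ_[(p : ℕ)]))
    (c : ℕ → Zhat) : Prop :=
  Tendsto c atTop (nhds 0) ∧
    ∀ p : Nat.Primes,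
      TendstoUniformly
        (fun N (x : ℤ_[(p : ℕ)]) => ∑ n ∈ Finset.range N,
          (c n p : ℚ_[(p : ℕ)]) * (Polynomial.aeval ((x : ℚ_[(p : ℕ)]))) (binomPoly n))
        (fun x => ((φ p x : ℤ_[(p : ℕ)]) : ℚ_[(p : ℕ)])) atTop

open Topology

theorem eq_sub_sum_of_tendsto_sum_mul_choose {R : Type*} [Ring R] [TopologicalSpace R] [T2Space R]
    {c : ℕ → R} {a : R} {k : ℕ}
    (h : Tendsto (fun N => ∑ n ∈ Finset.range N, c n * (k.choose n : R)) atTop (𝓝 a)) :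
    c k = a - ∑ n ∈ Finset.range k, c n * (k.choose n : R) := by
  have hconst : Tendsto (fun N => ∑ n ∈ Finset.range N, c n * (k.choose n : R)) atTop
      (𝓝 (∑ n ∈ Finset.range (k + 1), c n * (k.choose n : R))) := by
    refine tendsto_atTop_of_eventually_const (i₀ := k + 1) fun N hN => ?_
    refine (Finset.sum_subset (Finset.range_subset_range.mpr hN) fun n _ hn => ?_).symm
    rw [Nat.choose_eq_zero_of_lt (by simpa using hn), Nat.cast_zero, mul_zero]
  rw [tendsto_nhds_unique h hconst, Finset.sum_range_succ, Nat.choose_self, Nat.cast_one, mul_one,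
    add_sub_cancel_left]

namespace PadicInt

variable {p : ℕ} [Fact p.Prime]

theorem aeval_binomPoly (n : ℕ) (x : ℤ_[p]) :
    aeval (x : ℚ_[p]) (binomPoly n) = (mahler n x : ℚ_[p]) := by
  have hpoch :
      aeval (x : ℚ_[p]) (descPochhammer ℚ n) = n.factorial * (mahler n x : ℚ_[p]) := by
    rw [← descPochhammer_map (Int.castRingHom ℚ), ← algebraMap_int_eq, aeval_map_algebraMap,
      ← algebraMap_apply, aeval_algebraMap_apply, aeval_eq_smeval,
      Ring.descPochhammer_eq_factorial_smul_choose, algebraMap_apply, nsmul_eq_mul, coe_mul,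
      coe_natCast, mahler_apply]
  rw [binomPoly, map_smul, hpoch, Rat.smul_def, Rat.cast_inv, Rat.cast_natCast, ← mul_assoc,
    inv_mul_cancel₀ (by exact_mod_cast n.factorial_ne_zero), one_mul]

theorem aeval_binomPoly_natCast (n k : ℕ) :
    aeval (((k : ℤ_[p]) : ℚ_[p])) (binomPoly n) = (k.choose n : ℚ_[p]) := by
  rw [aeval_binomPoly, mahler_natCast_eq, coe_natCast]

theorem tendstoUniformly_sum_mahler (f : C(ℤ_[p], ℤ_[p])) :
    TendstoUniformly
      (fun N (x : ℤ_[p]) => ∑ n ∈ Finset.range N,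
        (((fwdDiff 1)^[n] f 0 : ℤ_[p]) : ℚ_[p]) * aeval (x : ℚ_[p]) (binomPoly n))
      (fun x => (f x : ℚ_[p])) atTop := by
  have h := ContinuousMap.tendsto_iff_tendstoUniformly.mp (hasSum_mahler f).tendsto_sum_nat
  convert uniformContinuous_subtype_val.comp_tendstoUniformly h using 1
  · ext N x
    simp only [ContinuousMap.coe_sum, Finset.sum_apply, mahlerTerm_apply, smul_eq_mul,
      aeval_binomPoly, mul_comm]
    change _ = ((∑ n ∈ Finset.range N, mahler n x * (fwdDiff 1)^[n] f 0 : ℤ_[p]) : ℚ_[p])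
    simp only [coe_sum, coe_mul]
  · rfl

end PadicInt

noncomputable def mahlerCoeffs
    (φ : ∀ p : Nat.Primes, C(ℤ_[(p : ℕ)], ℤ_[(p : ℕ)])) (n : ℕ) : Zhat :=
  fun p => (fwdDiff 1)^[n] (φ p) 0

theorem isMahlerExpansion_mahlerCoeffs
    (φ : ∀ p : Nat.Primes, C(ℤ_[(p : ℕ)], ℤ_[(p : ℕ)])) :
    IsMahlerExpansion φ (mahlerCoeffs φ) :=
  ⟨tendsto_pi_nhds.mpr fun p => PadicInt.fwdDiff_tendsto_zero (φ p),
    fun p => PadicInt.tendstoUniformly_sum_mahler (φ p)⟩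

namespace IsMahlerExpansion

variable {φ : ∀ p : Nat.Primes, C(ℤ_[(p : ℕ)], ℤ_[(p : ℕ)])} {c d : ℕ → Zhat}

theorem coeff_eq (hc : IsMahlerExpansion φ c) (k : ℕ) (p : Nat.Primes) :
    (c k p : ℚ_[(p : ℕ)]) = ((φ p (k : ℤ_[(p : ℕ)]) : ℤ_[(p : ℕ)]) : ℚ_[(p : ℕ)])
      - ∑ h ∈ Finset.range k, (c h p : ℚ_[(p : ℕ)]) * (k.choose h : ℚ_[(p : ℕ)]) := by
  refine eq_sub_sum_of_tendsto_sum_mul_choose (c := fun n => (c n p : ℚ_[(p : ℕ)])) ?_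
  simpa only [PadicInt.aeval_binomPoly_natCast] using (hc.2 p).tendsto_at (k : ℤ_[(p : ℕ)])

theorem unique (hc : IsMahlerExpansion φ c) (hd : IsMahlerExpansion φ d) : c = d := by
  funext k p
  induction k using Nat.strong_induction_on with
  | _ k ih =>
    refine PadicInt.ext ?_
    rw [hc.coeff_eq, hd.coeff_eq,
      Finset.sum_congr rfl fun h hh => by rw [ih h (Finset.mem_range.mp hh)]]

end IsMahlerExpansion

/-- **adelic Mahler theorem.** Every `φ ∈ ∏_p C(ℤ_p, ℤ_p)` has a unique
expansion `φ = Σ_n c_n binom(x, n)` with `c_n ∈ Ẑ`, `c_n → 0`, the series converging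
uniformly in each component; moreover `c_k = φ(k) − Σ_{h<k} c_h binom(k, h)`. -/
theorem adelic_mahler (φ : ∀ p : Nat.Primes, C(ℤ_[(p : ℕ)], ℤ_[(p : ℕ)])) :
    (∃! c : ℕ → Zhat, IsMahlerExpansion φ c)
      ∧ ∀ c : ℕ → Zhat, IsMahlerExpansion φ c →
          ∀ (k : ℕ) (p : Nat.Primes),
            (c k p : ℚ_[(p : ℕ)])
              = ((φ p (k : ℤ_[(p : ℕ)]) : ℤ_[(p : ℕ)]) : ℚ_[(p : ℕ)])
                - ∑ h ∈ Finset.range k,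
                    (c h p : ℚ_[(p : ℕ)]) * (Nat.choose k h : ℚ_[(p : ℕ)]) :=
  ⟨⟨mahlerCoeffs φ, isMahlerExpansion_mahlerCoeffs φ,
      fun _ hc => hc.unique (isMahlerExpansion_mahlerCoeffs φ)⟩,
    fun _ hc => hc.coeff_eq⟩
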